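/- arXiv:2406.01541 — 6 statements merged into one kernel-verified Lean document; each statement's English description precedes it below -/
import Mathlib

section
/- For every p ∈ (0,∞), the map M ↦ M^{-p} is locally Lipschitz continuous on the set of positive definite d×d real matrices. More precisely, if 0 < c ≤ M, N ≤ C (in the Löwner order), then ‖M^{-p} − N^{-p}‖ ≤ ((2(C−c) + πc)/(2π)) · (2/c)^{p+2} · ‖N − M‖ in the operator norm. -/
open Matrix

/-- Real matrix power of a matrix, defined through the functional calculus (spectral
decomposition) when the matrix is Hermitian, and by the junk value `0` otherwise. -/
noncomputable def matPow {d : ℕ} (A : Matrix (Fin d) (Fin d) ℝ) (p : ℝ) :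
    Matrix (Fin d) (Fin d) ℝ :=
  if hA : A.IsHermitian then hA.cfc (fun x => x ^ p) else 0

/-- The operator norm (induced by the Euclidean norm) of a matrix. -/
noncomputable def matOpNorm {d : ℕ} (A : Matrix (Fin d) (Fin d) ℝ) : ℝ :=
  ‖Matrix.toEuclideanCLM (𝕜 := ℝ) A‖

/-!
For `x ≥ c > 0`, `x ^ (-p) = Γ(p)⁻¹ ∫₀^∞ t ^ (p - 1) e ^ (-t x) dt`, so by the continuous functional
calculus `a ^ (-p) - b ^ (-p) = Γ(p)⁻¹ ∫₀^∞ t ^ (p - 1) (e ^ (-t a) - e ^ (-t b)) dt`. Duhamel's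
formula `e ^ (-t a) - e ^ (-t b) = ∫₀^t e ^ (-s a) (b - a) e ^ (-(t - s) b) ds` and
`‖e ^ (-s a)‖ ≤ e ^ (-s c)` bound the integrand by `t ^ p e ^ (-c t) ‖b - a‖`, whose integral is
`Γ(p + 1) ‖b - a‖ / c ^ (p + 1)`. The resulting constant `p / c ^ (p + 1)` is at most
`(2 (C - c) + π c) / (2 π) · (2 / c) ^ (p + 2)` because `p ≤ 2 ^ (p + 1)` and `c ≤ C`.
-/

open MeasureTheory Set NormedSpace

theorem integrableOn_rpow_mul_exp_neg_mul {p c : ℝ} (hp : 0 < p) (hc : 0 < c) :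
    IntegrableOn (fun t : ℝ => t ^ (p - 1) * Real.exp (-(c * t))) (Ioi 0) := by
  simpa using integrableOn_rpow_mul_exp_neg_mul_rpow (s := p - 1) (p := 1) (by linarith) one_pos hc

theorem integral_gamma_inv_mul_rpow_mul_exp_neg_mul {p x : ℝ} (hp : 0 < p) (hx : 0 < x) :
    ∫ t in Ioi 0, (Real.Gamma p)⁻¹ * t ^ (p - 1) * Real.exp (-(t * x)) = x ^ (-p) := by
  simp_rw [mul_assoc, mul_comm _ x]
  rw [integral_const_mul, Real.integral_rpow_mul_exp_neg_mul_Ioi hp hx, one_div,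
    Real.inv_rpow hx.le, Real.rpow_neg hx.le]
  field_simp [(Real.Gamma_pos_of_pos hp).ne']

theorem div_rpow_add_one_le_mul_two_div_rpow_add_two {p c C : ℝ} (hp : 0 < p) (hc : 0 < c)
    (hcC : c ≤ C) :
    p / c ^ (p + 1) ≤ (2 * (C - c) + Real.pi * c) / (2 * Real.pi) * (2 / c) ^ (p + 2) := by
  have hp2 : p ≤ 2 ^ (p + 1) := by
    have := one_add_mul_self_le_rpow_one_add (s := 1) (by norm_num) (by linarith : 1 ≤ p + 1)
    norm_num at this
    linarith
  have hK : c / 2 ≤ (2 * (C - c) + Real.pi * c) / (2 * Real.pi) := by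
    rw [div_le_div_iff₀ two_pos (by positivity)]
    nlinarith [Real.pi_pos]
  calc p / c ^ (p + 1) ≤ 2 ^ (p + 1) / c ^ (p + 1) := by gcongr
    _ = c / 2 * (2 / c) ^ (p + 2) := by
      rw [← Real.div_rpow two_pos.le hc.le, show p + 2 = p + 1 + 1 by ring,
        Real.rpow_add_one (by positivity) (p + 1), mul_left_comm, div_mul_div_cancel₀ two_ne_zero,
        div_self hc.ne', mul_one]
    _ ≤ _ := by gcongr

section BanachAlgebra

variable {A : Type*} [NormedRing A] [NormedAlgebra ℝ A] [CompleteSpace A]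

theorem exp_smul_sub_exp_smul_eq_integral (x y : A) (t : ℝ) :
    exp (t • x) - exp (t • y) = ∫ s in 0..t, exp (s • x) * (x - y) * exp ((t - s) • y) := by
  have hderiv (s : ℝ) : HasDerivAt (fun s : ℝ => exp (s • x) * exp ((t - s) • y))
      (exp (s • x) * (x - y) * exp ((t - s) • y)) s := by
    have hy := (hasDerivAt_exp_smul_const' y (t - s)).scomp s ((hasDerivAt_id' s).const_sub t)
    convert (hasDerivAt_exp_smul_const x s).mul hy using 1
    · rfl
    · simp only [Function.comp_apply, neg_smul, one_smul]
      noncomm_ring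
  have hcont : Continuous fun s : ℝ => exp (s • x) * (x - y) * exp ((t - s) • y) :=
    ((differentiable_exp_smul_const ℝ x).continuous.mul continuous_const).mul
      ((differentiable_exp_smul_const ℝ y).continuous.comp (continuous_const.sub continuous_id))
  rw [intervalIntegral.integral_eq_sub_of_hasDerivAt (fun s _ => hderiv s)
    (hcont.intervalIntegrable _ _)]
  simp

end BanachAlgebra

section FunctionalCalculus

variable {A : Type*} [NormedRing A] [StarRing A] [NormedAlgebra ℝ A] [StarModule ℝ A]
  [IsometricContinuousFunctionalCalculus ℝ A IsSelfAdjoint]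
  {a b : A} {p c : ℝ}

theorem exp_neg_smul_eq_cfc (ha : IsSelfAdjoint a) (t : ℝ) :
    exp (-(t • a)) = cfc (fun x => Real.exp (-(t * x))) a := by
  rw [← CFC.real_exp_eq_normedSpace_exp ((IsSelfAdjoint.all t).smul ha).neg, ← neg_smul,
    ← cfc_comp_smul (-t) Real.exp a]
  simp [smul_eq_mul]

theorem norm_exp_neg_smul_le (ha : IsSelfAdjoint a) (hca : ∀ x ∈ spectrum ℝ a, c ≤ x) {t : ℝ}
    (ht : 0 ≤ t) : ‖exp (-(t • a))‖ ≤ Real.exp (-(t * c)) := by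
  rw [exp_neg_smul_eq_cfc ha]
  refine norm_cfc_le (Real.exp_pos _).le fun x hx => ?_
  rw [Real.norm_of_nonneg (Real.exp_pos _).le, Real.exp_le_exp, neg_le_neg_iff]
  exact mul_le_mul_of_nonneg_left (hca x hx) ht

variable [CompleteSpace A]

theorem norm_exp_neg_smul_sub_le (ha : IsSelfAdjoint a) (hb : IsSelfAdjoint b)
    (hca : ∀ x ∈ spectrum ℝ a, c ≤ x) (hcb : ∀ x ∈ spectrum ℝ b, c ≤ x) {t : ℝ} (ht : 0 ≤ t) :
    ‖exp (-(t • a)) - exp (-(t • b))‖ ≤ t * Real.exp (-(t * c)) * ‖b - a‖ := by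
  rw [← smul_neg, ← smul_neg, exp_smul_sub_exp_smul_eq_integral, neg_sub_neg]
  have hbound : ∀ s ∈ uIoc 0 t, ‖exp (s • -a) * (b - a) * exp ((t - s) • -b)‖ ≤
      Real.exp (-(t * c)) * ‖b - a‖ := by
    intro s hs
    rw [uIoc_of_le ht] at hs
    rw [smul_neg, smul_neg]
    calc ‖exp (-(s • a)) * (b - a) * exp (-((t - s) • b))‖
        ≤ ‖exp (-(s • a))‖ * ‖b - a‖ * ‖exp (-((t - s) • b))‖ := norm_mul₃_le
      _ ≤ Real.exp (-(s * c)) * ‖b - a‖ * Real.exp (-((t - s) * c)) := by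
        gcongr
        · exact norm_exp_neg_smul_le ha hca hs.1.le
        · exact norm_exp_neg_smul_le hb hcb (sub_nonneg.2 hs.2)
      _ = Real.exp (-(t * c)) * ‖b - a‖ := by
        rw [mul_right_comm, ← Real.exp_add]
        ring_nf
  simpa [abs_of_nonneg ht, mul_comm, mul_left_comm, mul_assoc] using
    intervalIntegral.norm_integral_le_of_norm_le_const hbound

theorem cfc_rpow_neg_eq_integral (ha : IsSelfAdjoint a) (hp : 0 < p) (hc : 0 < c)
    (hca : ∀ x ∈ spectrum ℝ a, c ≤ x) :
    cfc (fun x : ℝ => x ^ (-p)) a =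
      ∫ t in Ioi 0, ((Real.Gamma p)⁻¹ * t ^ (p - 1)) • exp (-(t • a)) := by
  set f : ℝ → ℝ → ℝ := fun t x => (Real.Gamma p)⁻¹ * t ^ (p - 1) * Real.exp (-(t * x))
  have hf : ContinuousOn (Function.uncurry f) (Ioi 0 ×ˢ spectrum ℝ a) := by
    refine ContinuousOn.mul (ContinuousOn.mul continuousOn_const ?_) (by fun_prop)
    exact fun tx htx => (Real.continuousAt_rpow_const _ _ (.inl (ne_of_gt htx.1))).comp
      continuous_fst.continuousAt |>.continuousWithinAt
  have hbound : ∀ᵐ t ∂(volume.restrict (Ioi 0)), ∀ x ∈ spectrum ℝ a,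
      ‖f t x‖ ≤ (Real.Gamma p)⁻¹ * (t ^ (p - 1) * Real.exp (-(c * t))) := by
    refine ae_restrict_of_forall_mem measurableSet_Ioi fun t (ht : 0 < t) x hx => ?_
    have hΓ := Real.Gamma_pos_of_pos hp
    rw [Real.norm_of_nonneg (by positivity)]
    simp only [f, mul_assoc, mul_comm c t]
    gcongr
    exact hca x hx
  calc cfc (fun x : ℝ => x ^ (-p)) a = cfc (fun x => ∫ t in Ioi 0, f t x) a :=
        cfc_congr fun x hx => (integral_gamma_inv_mul_rpow_mul_exp_neg_mul hp
          (hc.trans_le (hca x hx))).symm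
    _ = ∫ t in Ioi 0, cfc (f t) a :=
        cfc_setIntegral measurableSet_Ioi f _ a hf hbound
          ((integrableOn_rpow_mul_exp_neg_mul hp hc).const_mul _).2
    _ = _ := by
        refine setIntegral_congr_fun measurableSet_Ioi fun t _ => ?_
        rw [exp_neg_smul_eq_cfc ha, ← cfc_const_mul _ (fun x => Real.exp (-(t * x))) a]

theorem integrableOn_rpow_smul_exp_neg_smul (ha : IsSelfAdjoint a) (hp : 0 < p) (hc : 0 < c)
    (hca : ∀ x ∈ spectrum ℝ a, c ≤ x) :
    IntegrableOn (fun t : ℝ => ((Real.Gamma p)⁻¹ * t ^ (p - 1)) • exp (-(t • a))) (Ioi 0) := by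
  have hcont : ContinuousOn (fun t : ℝ => ((Real.Gamma p)⁻¹ * t ^ (p - 1)) • exp (-(t • a)))
      (Ioi 0) := by
    refine ContinuousOn.smul (continuousOn_const.mul fun t ht => ?_)
      ((differentiable_exp_smul_const ℝ (-a)).continuous.congr fun t => by
        rw [smul_neg]).continuousOn
    exact (Real.continuousAt_rpow_const _ _ (.inl (ne_of_gt ht))).continuousWithinAt
  refine ((integrableOn_rpow_mul_exp_neg_mul hp hc).const_mul (Real.Gamma p)⁻¹).mono'
    (hcont.aestronglyMeasurable measurableSet_Ioi)
    (ae_restrict_of_forall_mem measurableSet_Ioi fun t (ht : 0 < t) => ?_)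
  have hΓ := Real.Gamma_pos_of_pos hp
  rw [norm_smul, Real.norm_of_nonneg (by positivity), mul_assoc, mul_comm c t]
  gcongr
  exact norm_exp_neg_smul_le ha hca ht.le

theorem norm_cfc_rpow_neg_sub_le (ha : IsSelfAdjoint a) (hb : IsSelfAdjoint b) (hp : 0 < p)
    (hc : 0 < c) (hca : ∀ x ∈ spectrum ℝ a, c ≤ x) (hcb : ∀ x ∈ spectrum ℝ b, c ≤ x) :
    ‖cfc (fun x : ℝ => x ^ (-p)) a - cfc (fun x : ℝ => x ^ (-p)) b‖ ≤
      p / c ^ (p + 1) * ‖b - a‖ := by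
  have hΓ := Real.Gamma_pos_of_pos hp
  rw [cfc_rpow_neg_eq_integral ha hp hc hca, cfc_rpow_neg_eq_integral hb hp hc hcb,
    ← integral_sub (integrableOn_rpow_smul_exp_neg_smul ha hp hc hca)
      (integrableOn_rpow_smul_exp_neg_smul hb hp hc hcb)]
  simp_rw [← smul_sub]
  have hbound : ∀ t ∈ Ioi (0 : ℝ),
      ‖((Real.Gamma p)⁻¹ * t ^ (p - 1)) • (exp (-(t • a)) - exp (-(t • b)))‖ ≤
        (Real.Gamma p)⁻¹ * ‖b - a‖ * (t ^ (p + 1 - 1) * Real.exp (-(c * t))) := by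
    intro t (ht : 0 < t)
    rw [norm_smul, Real.norm_of_nonneg (by positivity), show p + 1 - 1 = p - 1 + 1 by ring,
      Real.rpow_add_one ht.ne', mul_comm c t]
    calc (Real.Gamma p)⁻¹ * t ^ (p - 1) * ‖exp (-(t • a)) - exp (-(t • b))‖
        ≤ (Real.Gamma p)⁻¹ * t ^ (p - 1) * (t * Real.exp (-(t * c)) * ‖b - a‖) := by
          gcongr
          exact norm_exp_neg_smul_sub_le ha hb hca hcb ht.le
      _ = _ := by ring
  calc _ ≤ ∫ t in Ioi 0, (Real.Gamma p)⁻¹ * ‖b - a‖ * (t ^ (p + 1 - 1) * Real.exp (-(c * t))) :=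
        norm_integral_le_of_norm_le
          ((integrableOn_rpow_mul_exp_neg_mul (by linarith) hc).const_mul _)
          (ae_restrict_of_forall_mem measurableSet_Ioi hbound)
    _ = p / c ^ (p + 1) * ‖b - a‖ := by
        rw [integral_const_mul, Real.integral_rpow_mul_exp_neg_mul_Ioi (by linarith) hc,
          Real.Gamma_add_one hp.ne', one_div, Real.inv_rpow hc.le]
        field_simp

end FunctionalCalculus

section Matrix

open scoped MatrixOrder Matrix.Norms.L2Operator

variable {n : Type*} [Fintype n] [DecidableEq n] {A : Matrix n n ℝ}

theorem Matrix.IsHermitian.spectrum_ge_of_posSemidef_sub_smul_one (hA : A.IsHermitian) {c : ℝ}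
    (h : (A - c • 1).PosSemidef) : ∀ x ∈ spectrum ℝ A, c ≤ x := by
  rw [← algebraMap_le_iff_le_spectrum hA.isSelfAdjoint, Matrix.le_iff,
    Algebra.algebraMap_eq_smul_one]
  exact h

theorem Matrix.IsHermitian.spectrum_le_of_posSemidef_smul_one_sub (hA : A.IsHermitian) {C : ℝ}
    (h : (C • 1 - A).PosSemidef) : ∀ x ∈ spectrum ℝ A, x ≤ C := by
  rw [← le_algebraMap_iff_spectrum_le hA.isSelfAdjoint, Matrix.le_iff,
    Algebra.algebraMap_eq_smul_one]
  exact h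

theorem Matrix.IsHermitian.matPow_eq_cfc {d : ℕ} {M : Matrix (Fin d) (Fin d) ℝ}
    (hM : M.IsHermitian) (p : ℝ) : matPow M p = cfc (fun x : ℝ => x ^ p) M := by
  rw [matPow, dif_pos hM, hM.cfc_eq]

theorem matOpNorm_matPow_neg_sub_le {d : ℕ} {p c : ℝ} (hp : 0 < p) (hc : 0 < c)
    {M N : Matrix (Fin d) (Fin d) ℝ} (hM : M.IsHermitian) (hN : N.IsHermitian)
    (hMc : (M - c • 1).PosSemidef) (hNc : (N - c • 1).PosSemidef) :
    matOpNorm (matPow M (-p) - matPow N (-p)) ≤ p / c ^ (p + 1) * matOpNorm (N - M) := by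
  rw [hM.matPow_eq_cfc, hN.matPow_eq_cfc]
  exact norm_cfc_rpow_neg_sub_le hM.isSelfAdjoint hN.isSelfAdjoint hp hc
    (hM.spectrum_ge_of_posSemidef_sub_smul_one hMc) (hN.spectrum_ge_of_posSemidef_sub_smul_one hNc)

end Matrix

theorem matPow_neg_locally_lipschitz_general {d : ℕ} (hd : 1 ≤ d) (p c C : ℝ) (hp : 0 < p)
    (hc : 0 < c) (M N : Matrix (Fin d) (Fin d) ℝ) (hM : M.PosDef) (hN : N.PosDef)
    (hMc : (M - c • (1 : Matrix (Fin d) (Fin d) ℝ)).PosSemidef)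
    (hMC : ((C • (1 : Matrix (Fin d) (Fin d) ℝ)) - M).PosSemidef)
    (hNc : (N - c • (1 : Matrix (Fin d) (Fin d) ℝ)).PosSemidef) :
    matOpNorm (matPow M (-p) - matPow N (-p)) ≤
      (2 * (C - c) + Real.pi * c) / (2 * Real.pi) * (2 / c) ^ (p + 2) *
        matOpNorm (N - M) := by
  have : Nonempty (Fin d) := Fin.pos_iff_nonempty.1 hd
  obtain ⟨x, hx⟩ :=
    ContinuousFunctionalCalculus.spectrum_nonempty (R := ℝ) M hM.isHermitian.isSelfAdjoint
  have hcC : c ≤ C := (hM.isHermitian.spectrum_ge_of_posSemidef_sub_smul_one hMc x hx).trans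
    (hM.isHermitian.spectrum_le_of_posSemidef_smul_one_sub hMC x hx)
  refine (matOpNorm_matPow_neg_sub_le hp hc hM.isHermitian hN.isHermitian hMc hNc).trans ?_
  exact mul_le_mul_of_nonneg_right (div_rpow_add_one_le_mul_two_div_rpow_add_two hp hc hcC)
    (norm_nonneg _)

/-- Local Lipschitz continuity of `M ↦ M^{-p}` on the positive definite matrices: if
`0 < c ≤ M, N ≤ C` in the Löwner order, then
`‖M^{-p} − N^{-p}‖ ≤ ((2(C−c) + πc)/(2π)) · (2/c)^(p+2) · ‖N − M‖` in the operator norm. -/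
theorem matPow_neg_locally_lipschitz {d : ℕ} (hd : 1 ≤ d) (p c C : ℝ) (hp : 0 < p)
    (hc : 0 < c) (M N : Matrix (Fin d) (Fin d) ℝ) (hM : M.PosDef) (hN : N.PosDef)
    (hMc : (M - c • (1 : Matrix (Fin d) (Fin d) ℝ)).PosSemidef)
    (hMC : ((C • (1 : Matrix (Fin d) (Fin d) ℝ)) - M).PosSemidef)
    (hNc : (N - c • (1 : Matrix (Fin d) (Fin d) ℝ)).PosSemidef)
    (hNC : ((C • (1 : Matrix (Fin d) (Fin d) ℝ)) - N).PosSemidef) :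
    matOpNorm (matPow M (-p) - matPow N (-p)) ≤
      (2 * (C - c) + Real.pi * c) / (2 * Real.pi) * (2 / c) ^ (p + 2) *
        matOpNorm (N - M) :=
  matPow_neg_locally_lipschitz_general hd p c C hp hc M N hM hN hMc hMC hNc
end

section
/- Fix C ∈ (0,∞), d ≥ 1, and p ∈ ℕ (p ≥ 1). On the convex set 𝓜 := {A positive definite d×d : A ≤ C·I}, the function Ψ(M) := tr(M^{−p}) is μ-strongly convex with respect to the Frobenius norm, where μ := p(p+1)/C^{p+2}. That is, Ψ(N) − Ψ(M) − DΨ(M)(N−M) ≥ (μ/2)·|N−M|² for all M, N ∈ 𝓜, where DΨ(M)E = −p·tr(M^{−p−1}E). -/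
/-!
Write `A = M⁻¹`, `B = N⁻¹` and `E = N - M`, so that `A - B = A E B = B E A`. Telescoping
`A ^ p - B ^ p` twice, once with each of these factorisations, turns the Bregman remainder
`tr B ^ p - tr A ^ p + p tr (A ^ (p + 1) E)` into a sum of `p (p + 1) / 2` terms
`tr (A ^ a E B ^ b E)` with `a + b = p + 2`. The spectrum of `M` and of `N` lies in `(0, C]`, so
`A ^ a ≥ C ^ (-a)` and `B ^ b ≥ C ^ (-b)` in the Loewner order, and each term is at least
`C ^ (-(p + 2)) tr (E E) = C ^ (-(p + 2)) |E| ^ 2`.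
-/

open Matrix

/-- The Frobenius norm `|A| = tr(Aᵀ A)^{1/2}` of a real matrix. -/
noncomputable def frob {d : ℕ} (A : Matrix (Fin d) (Fin d) ℝ) : ℝ :=
  Real.sqrt (Aᵀ * A).trace

open Finset
open scoped MatrixOrder ComplexOrder

section Telescoping

variable {R : Type*} [Ring R]

theorem pow_succ_sub_pow_succ_eq_sum_antidiagonal (a b : R) (n : ℕ) :
    a ^ (n + 1) - b ^ (n + 1) = ∑ ij ∈ antidiagonal n, a ^ ij.1 * (a - b) * b ^ ij.2 := by
  induction n with
  | zero => simp
  | succ n ih =>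
    have key : a ^ (n + 2) - b ^ (n + 2) =
        a ^ (n + 1) * (a - b) + (a ^ (n + 1) - b ^ (n + 1)) * b := by
      rw [pow_succ a (n + 1), pow_succ b (n + 1)]
      noncomm_ring
    rw [key, ih, Nat.sum_antidiagonal_succ', Finset.sum_mul]
    simp only [pow_succ, pow_zero, mul_one, mul_assoc]

theorem pow_succ_sub_pow_succ_eq_sum_antidiagonal' (a b : R) (n : ℕ) :
    a ^ (n + 1) - b ^ (n + 1) = ∑ ij ∈ antidiagonal n, b ^ ij.1 * (a - b) * a ^ ij.2 := by
  induction n with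
  | zero => simp
  | succ n ih =>
    have key : a ^ (n + 2) - b ^ (n + 2) =
        (a - b) * a ^ (n + 1) + b * (a ^ (n + 1) - b ^ (n + 1)) := by
      rw [pow_succ' a (n + 1), pow_succ' b (n + 1)]
      noncomm_ring
    rw [key, ih, Nat.sum_antidiagonal_succ, Finset.mul_sum]
    simp only [pow_succ', pow_zero, one_mul, mul_assoc]

theorem pow_succ_sub_pow_succ_eq_sum_of_sub_eq (a b e : R) (h : a - b = a * e * b) (n : ℕ) :
    a ^ (n + 1) - b ^ (n + 1) = ∑ ij ∈ antidiagonal n, a ^ (ij.1 + 1) * e * b ^ (ij.2 + 1) := by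
  rw [pow_succ_sub_pow_succ_eq_sum_antidiagonal, h]
  refine sum_congr rfl fun ij _ => ?_
  rw [pow_succ, pow_succ']
  noncomm_ring

theorem pow_succ_sub_pow_succ_eq_sum_of_sub_eq' (a b e : R) (h : a - b = b * e * a) (n : ℕ) :
    a ^ (n + 1) - b ^ (n + 1) = ∑ ij ∈ antidiagonal n, b ^ (ij.1 + 1) * e * a ^ (ij.2 + 1) := by
  rw [pow_succ_sub_pow_succ_eq_sum_antidiagonal', h]
  refine sum_congr rfl fun ij _ => ?_
  rw [pow_succ, pow_succ']
  noncomm_ring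

end Telescoping

theorem sum_antidiagonal_snd_add_one (m : ℕ) :
    ∑ ij ∈ antidiagonal m, ((ij.2 : ℝ) + 1) = (m + 1) * (m + 2) / 2 := by
  induction m with
  | zero => simp
  | succ m ih =>
    rw [Nat.sum_antidiagonal_succ']
    simp only [Nat.cast_add, Nat.cast_one, sum_add_distrib, sum_const,
      Nat.card_antidiagonal, nsmul_eq_mul, ← add_assoc, ih]
    push_cast
    ring

variable {ι : Type*} [Fintype ι] [DecidableEq ι]

theorem Matrix.PosDef.smul_one_le_inv_pow {M : Matrix ι ι ℝ} (hM : M.PosDef) {C : ℝ}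
    (hMC : M ≤ C • 1) (k : ℕ) : C⁻¹ ^ k • (1 : Matrix ι ι ℝ) ≤ M⁻¹ ^ k := by
  have hspec : ∀ x ∈ spectrum ℝ M, 0 < x ∧ x ≤ C := fun x hx =>
    ⟨hM.isStrictlyPositive.spectrum_pos hx,
      (le_algebraMap_iff_spectrum_le hM.isHermitian.isSelfAdjoint).mp
        (by rwa [Algebra.algebraMap_eq_smul_one]) x hx⟩
  have hcont : ContinuousOn (fun x : ℝ => x⁻¹) (spectrum ℝ M) :=
    continuousOn_inv₀.mono fun x hx => (hspec x hx).1.ne'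
  have hcfc : cfc (fun x : ℝ => x⁻¹ ^ k) M = M⁻¹ ^ k := by
    rw [cfc_pow (fun x : ℝ => x⁻¹) k M hcont, cfc_ringInverse_id M hM.isUnit,
      nonsing_inv_eq_ringInverse]
  rw [← hcfc, ← Algebra.algebraMap_eq_smul_one]
  refine (algebraMap_le_cfc_iff _ _ _ (hcont.pow k)).mpr fun x hx => ?_
  obtain ⟨hx0, hxC⟩ := hspec x hx
  exact pow_le_pow_left₀ (inv_nonneg.mpr (hx0.le.trans hxC)) (inv_anti₀ hx0 hxC) k

theorem Matrix.PosSemidef.trace_mul_nonneg {𝕜 : Type*} [RCLike 𝕜] {P Q : Matrix ι ι 𝕜}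
    (hP : P.PosSemidef) (hQ : Q.PosSemidef) : 0 ≤ trace (P * Q) := by
  obtain ⟨B, rfl⟩ := CStarAlgebra.nonneg_iff_eq_star_mul_self.mp hP.nonneg
  rw [Matrix.mul_assoc, trace_mul_comm, star_eq_conjTranspose]
  exact (hQ.mul_mul_conjTranspose_same B).trace_nonneg

theorem Matrix.trace_mul_le_trace_mul_of_le {𝕜 : Type*} [RCLike 𝕜] {P P' Q : Matrix ι ι 𝕜}
    (hPP' : P ≤ P') (hQ : Q.PosSemidef) : trace (P * Q) ≤ trace (P' * Q) := by
  have := PosSemidef.trace_mul_nonneg hPP' hQ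
  rwa [Matrix.sub_mul, trace_sub, sub_nonneg] at this

theorem Matrix.mul_mul_trace_mul_self_le_trace_mul_mul_mul {P Q E : Matrix ι ι ℝ} {α β : ℝ}
    (hE : E.IsHermitian) (hα : 0 ≤ α) (hβ : 0 ≤ β) (hP : α • 1 ≤ P) (hQ : β • 1 ≤ Q) :
    α * β * trace (E * E) ≤ trace (P * E * Q * E) := by
  have hQ₀ : Q.PosSemidef := by simpa using (PosSemidef.one.smul hβ).add hQ
  have hEQE : (E * Q * E).PosSemidef := by
    simpa only [hE.eq] using hQ₀.conjTranspose_mul_mul_same E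
  have hEE : (E * E).PosSemidef := by
    simpa only [hE.eq] using posSemidef_conjTranspose_mul_self E
  calc α * β * trace (E * E) = α * trace ((β • 1) * (E * E)) := by
        rw [Matrix.smul_mul, Matrix.one_mul, trace_smul, smul_eq_mul, mul_assoc]
    _ ≤ α * trace (Q * (E * E)) :=
        mul_le_mul_of_nonneg_left (trace_mul_le_trace_mul_of_le hQ hEE) hα
    _ = trace ((α • 1) * (E * Q * E)) := by
        rw [Matrix.smul_mul, Matrix.one_mul, trace_smul, smul_eq_mul, trace_mul_cycle,
          trace_mul_comm Q]
    _ ≤ trace (P * (E * Q * E)) := trace_mul_le_trace_mul_of_le hP hEQE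
    _ = trace (P * E * Q * E) := by simp only [Matrix.mul_assoc]

theorem Matrix.trace_pow_bregman_eq_sum {R : Type*} [CommRing R] {A B E : Matrix ι ι R}
    (hAB : A - B = A * E * B) (hBA : A - B = B * E * A) (m : ℕ) :
    trace (B ^ (m + 1)) - trace (A ^ (m + 1)) + (m + 1) * trace (A ^ (m + 2) * E) =
      ∑ ij ∈ antidiagonal m, ∑ kl ∈ antidiagonal ij.2,
        trace (A ^ (ij.1 + kl.2 + 2) * E * B ^ (kl.1 + 1) * E) := by
  have hlin : (m + 1 : R) * trace (A ^ (m + 2) * E) =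
      ∑ ij ∈ antidiagonal m, trace (A ^ (ij.1 + 1) * E * A ^ (ij.2 + 1)) := by
    rw [Finset.sum_congr rfl fun ij hij => ?_, sum_const, Nat.card_antidiagonal, nsmul_eq_mul]
    · push_cast
      rfl
    · rw [trace_mul_comm, ← Matrix.mul_assoc, ← pow_add, ← mem_antidiagonal.mp hij]
      ring_nf
  have hsplit : trace (B ^ (m + 1)) - trace (A ^ (m + 1)) + (m + 1) * trace (A ^ (m + 2) * E) =
      ∑ ij ∈ antidiagonal m, trace (A ^ (ij.1 + 1) * E * (A ^ (ij.2 + 1) - B ^ (ij.2 + 1))) := by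
    rw [hlin, ← neg_sub, ← trace_sub, pow_succ_sub_pow_succ_eq_sum_of_sub_eq A B E hAB, trace_sum,
      ← sum_neg_distrib, ← sum_add_distrib]
    refine sum_congr rfl fun ij _ => ?_
    rw [Matrix.mul_sub, trace_sub]
    ring
  rw [hsplit]
  refine sum_congr rfl fun ij _ => ?_
  rw [pow_succ_sub_pow_succ_eq_sum_of_sub_eq' A B E hBA, Matrix.mul_sum, trace_sum]
  refine sum_congr rfl fun kl _ => ?_
  rw [← Matrix.mul_assoc, trace_mul_comm]
  simp only [Matrix.mul_assoc]
  rw [← Matrix.mul_assoc (A ^ _), ← pow_add]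
  ring_nf

theorem Matrix.le_trace_pow_bregman {A B E : Matrix ι ι ℝ} (hAB : A - B = A * E * B)
    (hBA : A - B = B * E * A) (hE : E.IsHermitian) {c : ℝ} (hc : 0 ≤ c)
    (hA : ∀ k : ℕ, c ^ k • 1 ≤ A ^ k) (hB : ∀ k : ℕ, c ^ k • 1 ≤ B ^ k) (m : ℕ) :
    (m + 1) * (m + 2) / 2 * (c ^ (m + 3) * trace (E * E)) ≤
      trace (B ^ (m + 1)) - trace (A ^ (m + 1)) + (m + 1) * trace (A ^ (m + 2) * E) := by
  have hterm : ∀ ij ∈ antidiagonal m, ∀ kl ∈ antidiagonal ij.2, c ^ (m + 3) * trace (E * E) ≤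
      trace (A ^ (ij.1 + kl.2 + 2) * E * B ^ (kl.1 + 1) * E) := by
    intro ij hij kl hkl
    have hexp : ij.1 + kl.2 + 2 + (kl.1 + 1) = m + 3 := by
      rw [HasAntidiagonal.mem_antidiagonal] at hij hkl
      omega
    rw [← hexp, pow_add]
    exact mul_mul_trace_mul_self_le_trace_mul_mul_mul hE (by positivity) (by positivity)
      (hA _) (hB _)
  have hsum := sum_le_sum fun ij hij => sum_le_sum (hterm ij hij)
  rw [← trace_pow_bregman_eq_sum hAB hBA] at hsum
  simp only [sum_const, Nat.card_antidiagonal, nsmul_eq_mul, Nat.cast_add, Nat.cast_one] at hsum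
  rwa [← sum_mul, sum_antidiagonal_snd_add_one] at hsum

theorem frob_sq {d : ℕ} (A : Matrix (Fin d) (Fin d) ℝ) : frob A ^ 2 = trace (Aᵀ * A) :=
  Real.sq_sqrt (posSemidef_conjTranspose_mul_self A).trace_nonneg

theorem trace_pow_inv_strongly_convex_general {d : ℕ} (C : ℝ) (hC : 0 < C)
    (p : ℕ) (M N : Matrix (Fin d) (Fin d) ℝ)
    (hM : M.PosDef) (hN : N.PosDef)
    (hMC : ((C • (1 : Matrix (Fin d) (Fin d) ℝ)) - M).PosSemidef)
    (hNC : ((C • (1 : Matrix (Fin d) (Fin d) ℝ)) - N).PosSemidef) :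
    (p : ℝ) * ((p : ℝ) + 1) / C ^ (p + 2) / 2 * frob (N - M) ^ 2 ≤
      ((N⁻¹) ^ p).trace - ((M⁻¹) ^ p).trace -
        (-(p : ℝ) * ((M⁻¹) ^ (p + 1) * (N - M)).trace) := by
  obtain _ | m := p
  · simp
  have hE : (N - M).IsHermitian := hN.isHermitian.sub hM.isHermitian
  have hunit : IsUnit M ↔ IsUnit N := iff_of_true hM.isUnit hN.isUnit
  have hAB : M⁻¹ - N⁻¹ = M⁻¹ * (N - M) * N⁻¹ := inv_sub_inv hunit
  have hBA : M⁻¹ - N⁻¹ = N⁻¹ * (N - M) * M⁻¹ := by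
    rw [← neg_sub, inv_sub_inv hunit.symm, ← neg_sub N M, Matrix.mul_neg, Matrix.neg_mul, neg_neg]
  have hbound := le_trace_pow_bregman hAB hBA hE (inv_nonneg.mpr hC.le)
    (hM.smul_one_le_inv_pow hMC) (hN.smul_one_le_inv_pow hNC) m
  have hEt : (N - M)ᵀ = N - M := (conjTranspose_eq_transpose_of_trivial _).symm.trans hE.eq
  rw [frob_sq, hEt]
  refine le_of_eq_of_le ?_ (hbound.trans_eq ?_)
  · rw [inv_pow]
    push_cast
    ring
  · push_cast
    ring

/-- On `𝓜 = {A pos. def. : A ≤ C·I}`, the function `Ψ(M) = tr(M^{−p})` (for `p ∈ ℕ`, `p ≥ 1`)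
is `μ`-strongly convex w.r.t. the Frobenius norm with `μ = p(p+1)/C^{p+2}`, where the derivative
is `DΨ(M)E = −p·tr(M^{−p−1}E)`. -/
theorem trace_pow_inv_strongly_convex {d : ℕ} (hd : 1 ≤ d) (C : ℝ) (hC : 0 < C)
    (p : ℕ) (hp : 1 ≤ p) (M N : Matrix (Fin d) (Fin d) ℝ)
    (hM : M.PosDef) (hN : N.PosDef)
    (hMC : ((C • (1 : Matrix (Fin d) (Fin d) ℝ)) - M).PosSemidef)
    (hNC : ((C • (1 : Matrix (Fin d) (Fin d) ℝ)) - N).PosSemidef) :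
    (p : ℝ) * ((p : ℝ) + 1) / C ^ (p + 2) / 2 * frob (N - M) ^ 2 ≤
      ((N⁻¹) ^ p).trace - ((M⁻¹) ^ p).trace -
        (-(p : ℝ) * ((M⁻¹) ^ (p + 1) * (N - M)).trace) :=
  trace_pow_inv_strongly_convex_general C hC p M N hM hN hMC hNC
end

section
/- There exists a compact metric space X (namely a two-point space), a continuous map m: X → ℝ^{2×2}_{psd}, and a convex, antitonic function Ψ: ℝ^{2×2}_{psd} → ℝ ∪ {∞} with dom Ψ = ℝ^{2×2}_{pd}, continuous on ℝ^{2×2}_{pd}, such that inf over Borel probability measures ξ on X of Ψ(M(ξ)) equals 1 but Ψ(M(ξ)) > 1 for every ξ; i.e., no optimal design exists. Concretely, take X = {x₁, x₂}, m(x₁) = diag(1,0), m(x₂) = diag(0,1), and Ψ(M) = e₁ᵀ M^{−1} e₁ for M positive definite, Ψ(M) = ∞ otherwise. -/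
/-!
For positive definite `M`, `cᵀ M⁻¹ c = max_z (2 zᵀ c - zᵀ M z)`, attained at `z = M⁻¹ c`. As a
supremum of functions that are affine and antitone in `M`, the c-criterion is convex and antitone.
On the design space `{0, 1} ⊆ ℝ` with `m(x) = diag(1 - x, x)`, a design with mean `t` has
information matrix `diag(1 - t, t)`: it is positive definite only for `0 < t < 1`, where the
criterion `e₁ᵀ M⁻¹ e₁` equals `(1 - t)⁻¹ > 1`. So the criterion values of all designs form exactly
`(1, ∞]`, whose infimum `1` is not attained.
-/

open Matrix MeasureTheory

/-- The information matrix `M(ξ) = ∫_X m(x) dξ(x)` of a design `ξ`, computed entrywise. -/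
noncomputable def infoMatrix {X : Type*} [MeasurableSpace X] {d : ℕ}
    (m : X → Matrix (Fin d) (Fin d) ℝ) (ξ : Measure X) : Matrix (Fin d) (Fin d) ℝ :=
  Matrix.of fun i j => ∫ x, m x i j ∂ξ

namespace Matrix

theorem convex_setOf_posDef {n : Type*} : Convex ℝ {A : Matrix n n ℝ | A.PosDef} := by
  intro A hA B hB a b ha hb hab
  rcases ha.eq_or_lt with rfl | ha
  · simpa [show b = 1 by linarith] using hB
  · exact (hA.smul ha).add_posSemidef (hB.posSemidef.smul hb)

variable {n : Type*} [Fintype n] [DecidableEq n]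

theorem PosDef.isGreatest_dotProduct_inv_mulVec {M : Matrix n n ℝ} (hM : M.PosDef) (c : n → ℝ) :
    IsGreatest (Set.range fun z => 2 * (z ⬝ᵥ c) - z ⬝ᵥ (M *ᵥ z)) (c ⬝ᵥ (M⁻¹ *ᵥ c)) := by
  set u := M⁻¹ *ᵥ c
  have hMu : M *ᵥ u = c := by
    rw [mulVec_mulVec, mul_nonsing_inv _ hM.det_pos.ne'.isUnit, one_mulVec]
  have huM (z : n → ℝ) : u ⬝ᵥ (M *ᵥ z) = c ⬝ᵥ z := by
    rw [dotProduct_mulVec, ← mulVec_transpose, (isHermitian_iff_isSymm.1 hM.1).eq, hMu]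
  refine ⟨⟨u, ?_⟩, ?_⟩
  · simp only [hMu, dotProduct_comm u c]
    ring
  · rintro _ ⟨z, rfl⟩
    have hnonneg := hM.posSemidef.dotProduct_mulVec_nonneg (z - u)
    simp only [star_trivial, mulVec_sub, sub_dotProduct, dotProduct_sub, huM, hMu] at hnonneg
    simp only [dotProduct_comm z c, dotProduct_comm u c] at hnonneg ⊢
    linarith

theorem convexOn_dotProduct_inv_mulVec (c : n → ℝ) :
    ConvexOn ℝ {A : Matrix n n ℝ | A.PosDef} fun A => c ⬝ᵥ (A⁻¹ *ᵥ c) := by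
  refine ⟨convex_setOf_posDef, fun A hA B hB a b ha hb hab => ?_⟩
  have hAB : (a • A + b • B).PosDef := convex_setOf_posDef hA hB ha hb hab
  obtain ⟨⟨z, hz⟩, -⟩ := hAB.isGreatest_dotProduct_inv_mulVec c
  have hzA := (hA.isGreatest_dotProduct_inv_mulVec c).2 ⟨z, rfl⟩
  have hzB := (hB.isGreatest_dotProduct_inv_mulVec c).2 ⟨z, rfl⟩
  simp only at hz hzA hzB ⊢
  rw [← hz, add_mulVec, smul_mulVec, smul_mulVec, dotProduct_add, dotProduct_smul,
    dotProduct_smul, smul_eq_mul, smul_eq_mul, smul_eq_mul, smul_eq_mul]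
  calc 2 * (z ⬝ᵥ c) - (a * (z ⬝ᵥ (A *ᵥ z)) + b * (z ⬝ᵥ (B *ᵥ z)))
      = a * (2 * (z ⬝ᵥ c) - z ⬝ᵥ (A *ᵥ z)) + b * (2 * (z ⬝ᵥ c) - z ⬝ᵥ (B *ᵥ z)) := by
        linear_combination (2 * (z ⬝ᵥ c)) * hab.symm
    _ ≤ a * (c ⬝ᵥ (A⁻¹ *ᵥ c)) + b * (c ⬝ᵥ (B⁻¹ *ᵥ c)) := by gcongr

theorem PosDef.dotProduct_inv_mulVec_le_of_posSemidef_sub {A B : Matrix n n ℝ} (hA : A.PosDef)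
    (hAB : (B - A).PosSemidef) (c : n → ℝ) : c ⬝ᵥ (B⁻¹ *ᵥ c) ≤ c ⬝ᵥ (A⁻¹ *ᵥ c) := by
  have hB : B.PosDef := by simpa using hA.add_posSemidef hAB
  obtain ⟨⟨z, hz⟩, -⟩ := hB.isGreatest_dotProduct_inv_mulVec c
  have hzA := (hA.isGreatest_dotProduct_inv_mulVec c).2 ⟨z, rfl⟩
  have hgap := hAB.dotProduct_mulVec_nonneg z
  simp only [star_trivial, sub_mulVec, dotProduct_sub] at hz hzA hgap ⊢
  linarith

theorem continuousAt_dotProduct_inv_mulVec {A : Matrix n n ℝ} (hA : A.det ≠ 0) (c : n → ℝ) :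
    ContinuousAt (fun A : Matrix n n ℝ => c ⬝ᵥ (A⁻¹ *ᵥ c)) A := by
  have hinv : ContinuousAt Inv.inv A :=
    continuousAt_matrix_inv A (by simpa [Ring.inverse_eq_inv'] using continuousAt_inv₀ hA)
  exact (continuous_const.dotProduct
    (continuous_id.matrix_mulVec continuous_const)).continuousAt.comp hinv

end Matrix

namespace OptimalDesign

section CCriterion

variable {n : Type*} [Fintype n] [DecidableEq n]

open Classical in
noncomputable def cCriterion (c : n → ℝ) (A : Matrix n n ℝ) : WithTop ℝ :=
  if A.PosDef then ↑(c ⬝ᵥ (A⁻¹ *ᵥ c)) else ⊤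

variable {c : n → ℝ} {A B : Matrix n n ℝ}

theorem cCriterion_of_posDef (hA : A.PosDef) : cCriterion c A = ↑(c ⬝ᵥ (A⁻¹ *ᵥ c)) := by
  simp [cCriterion, hA]

theorem cCriterion_of_not_posDef (hA : ¬A.PosDef) : cCriterion c A = ⊤ := by
  simp [cCriterion, hA]

theorem cCriterion_ne_top_iff : cCriterion c A ≠ ⊤ ↔ A.PosDef := by
  by_cases hA : A.PosDef <;> simp [cCriterion, hA]

theorem cCriterion_convex_comb_le {α : ℝ} (h0 : 0 ≤ α) (h1 : α ≤ 1) :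
    cCriterion c (α • A + (1 - α) • B) ≤ ↑α * cCriterion c A + ↑(1 - α) * cCriterion c B := by
  rcases h0.eq_or_lt with rfl | h0
  · simp
  rcases h1.eq_or_lt with rfl | h1
  · simp
  by_cases hA : A.PosDef
  · by_cases hB : B.PosDef
    · rw [cCriterion_of_posDef hA, cCriterion_of_posDef hB,
        cCriterion_of_posDef (convex_setOf_posDef hA hB h0.le (by linarith) (by ring)),
        ← WithTop.coe_mul, ← WithTop.coe_mul, ← WithTop.coe_add, WithTop.coe_le_coe]
      exact (convexOn_dotProduct_inv_mulVec c).2 hA hB h0.le (by linarith) (by ring)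
    · rw [cCriterion_of_not_posDef hB, WithTop.mul_top (by exact_mod_cast (sub_pos.2 h1).ne'),
        WithTop.add_top]
      exact le_top
  · rw [cCriterion_of_not_posDef hA, WithTop.mul_top (by exact_mod_cast h0.ne'), WithTop.top_add]
    exact le_top

theorem cCriterion_le_of_posSemidef_sub (hAB : (B - A).PosSemidef) :
    cCriterion c B ≤ cCriterion c A := by
  by_cases hA : A.PosDef
  · rw [cCriterion_of_posDef hA, cCriterion_of_posDef (by simpa using hA.add_posSemidef hAB),
      WithTop.coe_le_coe]
    exact hA.dotProduct_inv_mulVec_le_of_posSemidef_sub hAB c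
  · rw [cCriterion_of_not_posDef hA]
    exact le_top

theorem continuousOn_untopD_cCriterion :
    ContinuousOn (fun A => (cCriterion c A).untopD 0) {A : Matrix n n ℝ | A.PosDef} := by
  refine (continuousOn_of_forall_continuousAt fun A (hA : A.PosDef) =>
    continuousAt_dotProduct_inv_mulVec hA.det_pos.ne' c).congr fun A hA => ?_
  rw [cCriterion_of_posDef hA, WithTop.untopD_coe]

theorem cCriterion_single_diagonal (i : n) (w : n → ℝ) :
    cCriterion (Pi.single i 1) (diagonal w) = if ∀ k, 0 < w k then ↑(w i)⁻¹ else ⊤ := by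
  by_cases hw : ∀ k, 0 < w k
  · have hinv : (diagonal w)⁻¹ = diagonal fun k => (w k)⁻¹ :=
      inv_eq_right_inv <| by
        simp [diagonal_mul_diagonal, fun k => mul_inv_cancel₀ (hw k).ne']
    rw [if_pos hw, cCriterion_of_posDef (posDef_diagonal_iff.2 hw), hinv]
    simp
  · rw [if_neg hw, cCriterion_of_not_posDef (posDef_diagonal_iff.not.2 hw)]

end CCriterion

theorem infoMatrix_diagonal {X : Type*} [MeasurableSpace X] {d : ℕ} (f : X → Fin d → ℝ)
    (ξ : Measure X) :
    infoMatrix (fun x => diagonal (f x)) ξ = diagonal fun k => ∫ x, f x k ∂ξ := by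
  ext i j
  by_cases hij : i = j <;> simp [infoMatrix, diagonal_apply, hij]

-- Realized inside `ℝ` (rather than as `Fin 2`) to inherit a metric space structure.
abbrev TwoPoints : Type := ({0, 1} : Set ℝ)

noncomputable def twoPointInfo (x : TwoPoints) : Matrix (Fin 2) (Fin 2) ℝ :=
  diagonal ![1 - x, x]

theorem infoMatrix_twoPointInfo (ξ : Measure TwoPoints) [IsProbabilityMeasure ξ] :
    infoMatrix twoPointInfo ξ = diagonal ![1 - ∫ x, (x : ℝ) ∂ξ, ∫ x, (x : ℝ) ∂ξ] := by
  unfold twoPointInfo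
  rw [infoMatrix_diagonal]
  congr 1
  ext k
  fin_cases k
  · have hint : Integrable (fun x : TwoPoints => (x : ℝ)) ξ := .of_finite
    simp [integral_sub (integrable_const 1) hint]
  · simp

theorem TwoPoints.coe_mem_Icc (x : TwoPoints) : (x : ℝ) ∈ Set.Icc 0 1 := by
  obtain ⟨x, rfl | rfl⟩ := x <;> norm_num

theorem posSemidef_twoPointInfo (x : TwoPoints) : (twoPointInfo x).PosSemidef := by
  simp [twoPointInfo, posSemidef_diagonal_iff, Fin.forall_fin_two, x.coe_mem_Icc.1,
    x.coe_mem_Icc.2]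

theorem integral_coe_mem_Icc (ξ : Measure TwoPoints) [IsProbabilityMeasure ξ] :
    ∫ x, (x : ℝ) ∂ξ ∈ Set.Icc 0 1 :=
  ⟨integral_nonneg fun x => x.coe_mem_Icc.1,
    by simpa using integral_mono (μ := ξ) .of_finite (integrable_const 1) fun x => x.coe_mem_Icc.2⟩

theorem exists_isProbabilityMeasure_integral_coe_eq {t : ℝ} (ht : t ∈ Set.Icc 0 1) :
    ∃ ξ : Measure TwoPoints, IsProbabilityMeasure ξ ∧ ∫ x, (x : ℝ) ∂ξ = t := by
  let x₀ : TwoPoints := ⟨0, by simp⟩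
  let x₁ : TwoPoints := ⟨1, by simp⟩
  refine ⟨(1 - t).toNNReal • Measure.dirac x₀ + t.toNNReal • Measure.dirac x₁, ⟨?_⟩, ?_⟩
  · simp [← ENNReal.coe_add, ← Real.toNNReal_add (sub_nonneg.2 ht.2) ht.1]
  · rw [integral_add_measure .of_finite .of_finite, integral_smul_nnreal_measure,
      integral_smul_nnreal_measure, integral_dirac, integral_dirac]
    simp [x₀, x₁, NNReal.smul_def, ht.1]

theorem cCriterion_diagonal_one_sub_image_Icc :
    (fun t => cCriterion (Pi.single 0 1) (diagonal ![1 - t, t])) '' Set.Icc 0 1 =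
      Set.Ioi ((1 : ℝ) : WithTop ℝ) := by
  simp only [cCriterion_single_diagonal, Fin.forall_fin_two]
  ext r
  constructor
  · rintro ⟨t, ht, rfl⟩
    simp only [cons_val_zero, cons_val_one, sub_pos]
    split_ifs with h
    · exact WithTop.coe_lt_coe.2 ((one_lt_inv₀ (sub_pos.2 h.1)).2 (by linarith [h.2]))
    · exact WithTop.coe_lt_top 1
  · intro hr
    induction r with
    | top => exact ⟨0, by simp⟩
    | coe s =>
      have hs : 1 < s := WithTop.coe_lt_coe.1 hr
      have hs0 : 0 < s := by linarith
      refine ⟨1 - s⁻¹, ⟨by linarith [inv_lt_one_of_one_lt₀ hs], by linarith [inv_pos.2 hs0]⟩, ?_⟩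
      simp [inv_lt_one_of_one_lt₀ hs, hs0]

theorem setOf_cCriterion_infoMatrix_eq_Ioi :
    {r : WithTop ℝ | ∃ ξ : Measure TwoPoints, IsProbabilityMeasure ξ ∧
      r = cCriterion (Pi.single 0 1) (infoMatrix twoPointInfo ξ)} =
      Set.Ioi ((1 : ℝ) : WithTop ℝ) := by
  rw [← cCriterion_diagonal_one_sub_image_Icc]
  ext r
  constructor
  · rintro ⟨ξ, hξ, rfl⟩
    exact ⟨_, integral_coe_mem_Icc ξ, by rw [infoMatrix_twoPointInfo]⟩
  · rintro ⟨t, ht, rfl⟩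
    obtain ⟨ξ, hξ, rfl⟩ := exists_isProbabilityMeasure_integral_coe_eq ht
    exact ⟨ξ, hξ, by rw [infoMatrix_twoPointInfo]⟩

end OptimalDesign

/-- Nonexistence of optimal designs without lower semicontinuity: there is a compact (two-point)
metric design space `X`, a continuous psd-valued `m`, and a convex, antitonic criterion `Ψ` with
effective domain the positive definite matrices and continuous there (namely the weighted
A-criterion `Ψ(M) = e₁ᵀ M⁻¹ e₁` with `m(x₁) = diag(1,0)`, `m(x₂) = diag(0,1)`), such that
the infimum of `Ψ(M(ξ))` over all designs equals `1` but `Ψ(M(ξ)) > 1` for every design `ξ`. -/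
theorem no_optimal_design_example :
    ∃ (X : Type) (_ : MetricSpace X) (_ : CompactSpace X) (_ : MeasurableSpace X)
      (_ : BorelSpace X) (m : X → Matrix (Fin 2) (Fin 2) ℝ)
      (Ψ : Matrix (Fin 2) (Fin 2) ℝ → WithTop ℝ),
      Continuous m ∧ (∀ x, (m x).PosSemidef) ∧
      (∃ x₁ x₂ : X, x₁ ≠ x₂ ∧ (∀ x : X, x = x₁ ∨ x = x₂) ∧
        m x₁ = Matrix.diagonal ![1, 0] ∧ m x₂ = Matrix.diagonal ![0, 1]) ∧
      (∀ A : Matrix (Fin 2) (Fin 2) ℝ,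
        (A.PosDef → Ψ A = (((A⁻¹) 0 0 : ℝ) : WithTop ℝ)) ∧ (¬ A.PosDef → Ψ A = ⊤)) ∧
      (∀ A B : Matrix (Fin 2) (Fin 2) ℝ, A.PosSemidef → B.PosSemidef →
        ∀ α : ℝ, 0 ≤ α → α ≤ 1 →
          Ψ (α • A + (1 - α) • B) ≤ (α : WithTop ℝ) * Ψ A + ((1 - α : ℝ) : WithTop ℝ) * Ψ B) ∧
      (∀ A B : Matrix (Fin 2) (Fin 2) ℝ, A.PosSemidef → (B - A).PosSemidef → Ψ B ≤ Ψ A) ∧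
      ({A : Matrix (Fin 2) (Fin 2) ℝ | A.PosSemidef ∧ Ψ A ≠ ⊤} =
        {A : Matrix (Fin 2) (Fin 2) ℝ | A.PosDef}) ∧
      ContinuousOn (fun A => (Ψ A).untopD 0) {A : Matrix (Fin 2) (Fin 2) ℝ | A.PosDef} ∧
      IsGLB {r : WithTop ℝ | ∃ ξ : Measure X, IsProbabilityMeasure ξ ∧ r = Ψ (infoMatrix m ξ)}
        ((1 : ℝ) : WithTop ℝ) ∧
      (∀ ξ : Measure X, IsProbabilityMeasure ξ → ((1 : ℝ) : WithTop ℝ) < Ψ (infoMatrix m ξ)) := by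
  open OptimalDesign in
  refine ⟨TwoPoints, inferInstance, inferInstance, inferInstance, inferInstance, twoPointInfo,
    cCriterion (Pi.single 0 1), continuous_of_discreteTopology, posSemidef_twoPointInfo,
    ⟨⟨0, by simp⟩, ⟨1, by simp⟩, by simp, fun ⟨x, hx⟩ => by simpa using hx, by simp [twoPointInfo],
      by simp [twoPointInfo]⟩,
    fun A => ⟨fun hA => by simp [cCriterion_of_posDef hA], cCriterion_of_not_posDef⟩,
    fun A B _ _ α => cCriterion_convex_comb_le, fun A B _ => cCriterion_le_of_posSemidef_sub,
    Set.ext fun A => ⟨fun hA => cCriterion_ne_top_iff.1 hA.2,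
      fun hA => ⟨hA.posSemidef, cCriterion_ne_top_iff.2 hA⟩⟩,
    continuousOn_untopD_cCriterion, setOf_cCriterion_infoMatrix_eq_Ioi ▸ isGLB_Ioi,
    fun ξ hξ => setOf_cCriterion_infoMatrix_eq_Ioi.subset ⟨ξ, hξ, rfl⟩⟩
end

section
/- Let X be a compact metric space, m: X → ℝ^{d×d}_{psd} continuous, M(ξ) := ∫_X m dξ, and Ψ: ℝ^{d×d}_{psd} → ℝ ∪ {∞} convex with a continuous sensitivity function ψ w.r.t. M(Ξ(X)). Then the map ξ ↦ Ψ(M(ξ)) is continuous on Ξ_fin(X) := {ξ ∈ Ξ(X) : Ψ(M(ξ)) < ∞} with respect to weak convergence of measures. In particular, |Ψ(M(η)) − Ψ(M(ξ))| ≤ max{ −∫_X ψ(M(η),x) dξ(x), −∫_X ψ(M(ξ),x) dη(x) } for all ξ, η ∈ Ξ_fin(X). -/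
/-!
Convexity of `Ψ` makes `ψ(M(ξ), ·)` a subgradient:
`∫ ψ(M(ξ), x) dη(x) ≤ Ψ(M(η)) − Ψ(M(ξ))`, and using this in both directions gives the bound.
As `η → ξ` weakly, both terms of the maximum tend to `∫ ψ(M(ξ), x) dξ(x) = 0`:
`∫ ψ(M(ξ), x) dη(x)` by weak convergence, since `ψ(M(ξ), ·)` is continuous, and
`∫ ψ(M(η), x) dξ(x)` because `M(η) → M(ξ)` and, `X` being compact, `ψ(A, ·) → ψ(M(ξ), ·)`
uniformly as `A → M(ξ)`.
-/

open Matrix MeasureTheory Filter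

/-- `ψ` is a sensitivity function of `Ψ` w.r.t. the set of information matrices. -/
def IsSensitivity {X : Type*} [MeasurableSpace X] {d : ℕ}
    (m : X → Matrix (Fin d) (Fin d) ℝ)
    (Ψ : Matrix (Fin d) (Fin d) ℝ → WithTop ℝ)
    (ψ : Matrix (Fin d) (Fin d) ℝ → X → ℝ) : Prop :=
  ∀ A : Matrix (Fin d) (Fin d) ℝ, A.PosSemidef → Ψ A ≠ ⊤ →
    ∀ η : Measure X, IsProbabilityMeasure η →
      Integrable (fun x => ψ A x) η ∧
      (∃ ts > (0 : ℝ), ∀ t ∈ Set.Icc (0 : ℝ) ts, Ψ (A + t • (infoMatrix m η - A)) ≠ ⊤) ∧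
      Tendsto
        (fun t : ℝ =>
          ((Ψ (A + t • (infoMatrix m η - A))).untopD 0 - (Ψ A).untopD 0) / t)
        (nhdsWithin 0 (Set.Ioi 0)) (nhds (∫ x, ψ A x ∂η))

open Topology

theorem le_sub_of_tendsto_slope_of_le_chord {g : ℝ → ℝ} {a b L : ℝ}
    (hchord : ∀ᶠ t in 𝓝[>] 0, g t ≤ t * a + (1 - t) * b)
    (hslope : Tendsto (fun t => (g t - b) / t) (𝓝[>] 0) (𝓝 L)) : L ≤ a - b := by
  refine le_of_tendsto hslope ?_
  filter_upwards [hchord, self_mem_nhdsWithin] with t hg (ht : 0 < t)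
  rw [div_le_iff₀ ht]
  linarith

theorem WithTop.untopD_le_of_le_convexComb {a b c : WithTop ℝ} (ha : a ≠ ⊤) (hb : b ≠ ⊤) {t : ℝ}
    (h : c ≤ (t : WithTop ℝ) * a + ((1 - t : ℝ) : WithTop ℝ) * b) :
    c.untopD 0 ≤ t * a.untopD 0 + (1 - t) * b.untopD 0 := by
  lift a to ℝ using ha
  lift b to ℝ using hb
  rw [← WithTop.coe_mul, ← WithTop.coe_mul, ← WithTop.coe_add] at h
  exact WithTop.untopD_le h

theorem ContinuousOn.tendstoUniformly_nhdsWithin {α β γ : Type*} [TopologicalSpace α]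
    [TopologicalSpace β] [CompactSpace β] [UniformSpace γ] {f : α → β → γ} {s : Set α} {a : α}
    (h : ContinuousOn (Function.uncurry f) (s ×ˢ Set.univ)) (ha : a ∈ s) :
    TendstoUniformly f (f a) (𝓝[s] a) := by
  intro u hu
  obtain ⟨v, hv, hvu⟩ := isCompact_univ.mem_uniformity_of_prod h ha (tendsto_swap_uniformity hu)
  filter_upwards [hv] with b hb x using hvu b hb x (Set.mem_univ x)

theorem tendsto_integral_of_tendstoUniformly {X ι E : Type*} [MeasurableSpace X]
    [NormedAddCommGroup E] [NormedSpace ℝ E] {μ : Measure X} [IsFiniteMeasure μ]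
    {l : Filter ι} {F : ι → X → E} {f : X → E} (hF : ∀ᶠ i in l, Integrable (F i) μ)
    (hf : Integrable f μ) (h : TendstoUniformly F f l) :
    Tendsto (fun i => ∫ x, F i x ∂μ) l (𝓝 (∫ x, f x ∂μ)) := by
  rw [Metric.tendsto_nhds]
  intro ε hε
  have hδ : 0 < ε / (μ.real Set.univ + 1) := by positivity
  filter_upwards [hF, Metric.tendstoUniformly_iff.mp h _ hδ] with i hFi hclose
  rw [dist_eq_norm, ← integral_sub hFi hf]
  calc ‖∫ x, F i x - f x ∂μ‖ ≤ ε / (μ.real Set.univ + 1) * μ.real Set.univ :=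
        norm_integral_le_of_norm_le_const
          (Eventually.of_forall fun x => by rw [← dist_eq_norm, dist_comm]; exact (hclose x).le)
    _ < ε := by
        rw [div_mul_eq_mul_div, div_lt_iff₀ (by positivity)]
        nlinarith [measureReal_nonneg (μ := μ) (s := Set.univ)]

section InfoMatrix

variable {X : Type*} [MeasurableSpace X] {d : ℕ}

theorem dotProduct_infoMatrix_mulVec {m : X → Matrix (Fin d) (Fin d) ℝ} {ξ : Measure X}
    (hint : ∀ i j, Integrable (fun x => m x i j) ξ) (v : Fin d → ℝ) :
    v ⬝ᵥ (infoMatrix m ξ *ᵥ v) = ∫ x, v ⬝ᵥ (m x *ᵥ v) ∂ξ := by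
  have hrow : ∀ i, Integrable (fun x => ∑ j, m x i j * v j) ξ := fun i =>
    integrable_finsetSum _ fun j _ => (hint i j).mul_const (v j)
  simp only [dotProduct, mulVec, infoMatrix, of_apply]
  rw [integral_finsetSum _ fun i _ => (hrow i).const_mul (v i)]
  refine Finset.sum_congr rfl fun i _ => ?_
  rw [integral_const_mul, integral_finsetSum _ fun j _ => (hint i j).mul_const (v j)]
  simp only [integral_mul_const]

theorem infoMatrix_posSemidef {m : X → Matrix (Fin d) (Fin d) ℝ} {ξ : Measure X}
    (hint : ∀ i j, Integrable (fun x => m x i j) ξ) (hpsd : ∀ x, (m x).PosSemidef) :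
    (infoMatrix m ξ).PosSemidef := by
  refine PosSemidef.of_dotProduct_mulVec_nonneg ?_ fun v => ?_
  · ext i j
    simpa [infoMatrix] using integral_congr_ae (Eventually.of_forall fun x => (hpsd x).1.apply i j)
  · rw [star_trivial, dotProduct_infoMatrix_mulVec hint]
    exact integral_nonneg fun x => by simpa using (hpsd x).dotProduct_mulVec_nonneg v

variable [TopologicalSpace X] [CompactSpace X] [OpensMeasurableSpace X]
  {m : X → Matrix (Fin d) (Fin d) ℝ}

theorem infoMatrix_posSemidef_of_continuous (hm : Continuous m) (hpsd : ∀ x, (m x).PosSemidef)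
    (ξ : Measure X) [IsFiniteMeasure ξ] : (infoMatrix m ξ).PosSemidef :=
  infoMatrix_posSemidef
    (fun i j => (hm.matrix_elem i j).integrable_of_hasCompactSupport (.of_compactSpace _)) hpsd

theorem continuous_infoMatrix (hm : Continuous m) :
    Continuous fun μ : ProbabilityMeasure X => infoMatrix m (μ : Measure X) :=
  continuous_matrix fun i j =>
    ProbabilityMeasure.continuous_integral_continuousMap (⟨_, hm.matrix_elem i j⟩ : C(X, ℝ))

end InfoMatrix

def ConvexOnPosSemidef {d : ℕ} (Ψ : Matrix (Fin d) (Fin d) ℝ → WithTop ℝ) : Prop :=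
  ∀ A B : Matrix (Fin d) (Fin d) ℝ, A.PosSemidef → B.PosSemidef → ∀ α : ℝ, 0 ≤ α → α ≤ 1 →
    Ψ (α • A + (1 - α) • B) ≤ (α : WithTop ℝ) * Ψ A + ((1 - α : ℝ) : WithTop ℝ) * Ψ B

namespace IsSensitivity

variable {X : Type*} [MeasurableSpace X] {d : ℕ} {m : X → Matrix (Fin d) (Fin d) ℝ}
  {Ψ : Matrix (Fin d) (Fin d) ℝ → WithTop ℝ} {ψ : Matrix (Fin d) (Fin d) ℝ → X → ℝ}

theorem integral_le_sub (hψ : IsSensitivity m Ψ ψ) (hconv : ConvexOnPosSemidef Ψ)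
    {A : Matrix (Fin d) (Fin d) ℝ} (hA : A.PosSemidef) (hΨA : Ψ A ≠ ⊤)
    {η : Measure X} [IsProbabilityMeasure η] (hη : (infoMatrix m η).PosSemidef)
    (hΨη : Ψ (infoMatrix m η) ≠ ⊤) :
    ∫ x, ψ A x ∂η ≤ (Ψ (infoMatrix m η)).untopD 0 - (Ψ A).untopD 0 := by
  refine le_sub_of_tendsto_slope_of_le_chord ?_ (hψ A hA hΨA η inferInstance).2.2
  filter_upwards [Ioc_mem_nhdsGT zero_lt_one] with t ht
  have hsegment : A + t • (infoMatrix m η - A) = t • infoMatrix m η + (1 - t) • A := by module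
  rw [hsegment]
  exact WithTop.untopD_le_of_le_convexComb hΨη hΨA (hconv _ _ hη hA t ht.1.le ht.2)

theorem integral_self_eq_zero (hψ : IsSensitivity m Ψ ψ) {ξ : Measure X} [IsProbabilityMeasure ξ]
    (hξ : (infoMatrix m ξ).PosSemidef) (hΨξ : Ψ (infoMatrix m ξ) ≠ ⊤) :
    ∫ x, ψ (infoMatrix m ξ) x ∂ξ = 0 := by
  refine tendsto_nhds_unique (hψ _ hξ hΨξ ξ inferInstance).2.2 ?_
  simp only [sub_self, smul_zero, add_zero, zero_div, tendsto_const_nhds]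

theorem abs_sub_le_max (hψ : IsSensitivity m Ψ ψ) (hconv : ConvexOnPosSemidef Ψ)
    {ξ η : Measure X} [IsProbabilityMeasure ξ] [IsProbabilityMeasure η]
    (hξ : (infoMatrix m ξ).PosSemidef) (hη : (infoMatrix m η).PosSemidef)
    (hΨξ : Ψ (infoMatrix m ξ) ≠ ⊤) (hΨη : Ψ (infoMatrix m η) ≠ ⊤) :
    |(Ψ (infoMatrix m η)).untopD 0 - (Ψ (infoMatrix m ξ)).untopD 0| ≤
      max (-(∫ x, ψ (infoMatrix m η) x ∂ξ)) (-(∫ x, ψ (infoMatrix m ξ) x ∂η)) := by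
  have hξη := hψ.integral_le_sub hconv hξ hΨξ hη hΨη
  have hηξ := hψ.integral_le_sub hconv hη hΨη hξ hΨξ
  rw [abs_sub_le_iff]
  constructor
  · exact le_max_of_le_left (by linarith)
  · exact le_max_of_le_right (by linarith)

variable [TopologicalSpace X] [CompactSpace X] [OpensMeasurableSpace X]

theorem continuousOn (hψ : IsSensitivity m Ψ ψ) (hconv : ConvexOnPosSemidef Ψ)
    (hm : Continuous m) (hpsd : ∀ x, (m x).PosSemidef)
    (hψcont : ContinuousOn (fun q : Matrix (Fin d) (Fin d) ℝ × X => ψ q.1 q.2)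
      ({A : Matrix (Fin d) (Fin d) ℝ | A.PosSemidef ∧ Ψ A ≠ ⊤} ×ˢ Set.univ)) :
    ContinuousOn (fun μ : ProbabilityMeasure X => (Ψ (infoMatrix m (μ : Measure X))).untopD 0)
      {μ : ProbabilityMeasure X | Ψ (infoMatrix m (μ : Measure X)) ≠ ⊤} := by
  set S := {A : Matrix (Fin d) (Fin d) ℝ | A.PosSemidef ∧ Ψ A ≠ ⊤}
  set s := {μ : ProbabilityMeasure X | Ψ (infoMatrix m (μ : Measure X)) ≠ ⊤}
  intro μ₀ hμ₀
  have hM₀ := infoMatrix_posSemidef_of_continuous hm hpsd (μ₀ : Measure X)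
  have hMS : Tendsto (fun μ : ProbabilityMeasure X => infoMatrix m (μ : Measure X))
      (𝓝[s] μ₀) (𝓝[S] infoMatrix m (μ₀ : Measure X)) :=
    tendsto_nhdsWithin_iff.2 ⟨(continuous_infoMatrix hm).continuousWithinAt,
      eventually_mem_nhdsWithin.mono fun μ hμ =>
        ⟨infoMatrix_posSemidef_of_continuous hm hpsd _, hμ⟩⟩
  have hfirst : Tendsto (fun μ : ProbabilityMeasure X =>
      ∫ x, ψ (infoMatrix m (μ : Measure X)) x ∂(μ₀ : Measure X)) (𝓝[s] μ₀) (𝓝 0) := by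
    rw [← hψ.integral_self_eq_zero hM₀ hμ₀]
    refine tendsto_integral_of_tendstoUniformly
      (hMS.eventually (eventually_mem_nhdsWithin.mono fun A hA =>
        (hψ A hA.1 hA.2 _ inferInstance).1))
      (hψ _ hM₀ hμ₀ _ inferInstance).1
      fun u hu => hMS.eventually (hψcont.tendstoUniformly_nhdsWithin ⟨hM₀, hμ₀⟩ u hu)
  have hsecond : Tendsto (fun μ : ProbabilityMeasure X =>
      ∫ x, ψ (infoMatrix m (μ₀ : Measure X)) x ∂(μ : Measure X)) (𝓝[s] μ₀) (𝓝 0) := by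
    rw [← hψ.integral_self_eq_zero hM₀ hμ₀]
    have hslice : Continuous (ψ (infoMatrix m (μ₀ : Measure X))) :=
      hψcont.comp_continuous (.prodMk_right _) fun x => ⟨⟨hM₀, hμ₀⟩, Set.mem_univ x⟩
    exact (ProbabilityMeasure.continuous_integral_continuousMap
      (⟨_, hslice⟩ : C(X, ℝ))).continuousWithinAt
  rw [ContinuousWithinAt, tendsto_iff_norm_sub_tendsto_zero]
  refine squeeze_zero' (.of_forall fun _ => norm_nonneg _)
    (eventually_mem_nhdsWithin.mono fun μ hμ =>
      hψ.abs_sub_le_max hconv hM₀ (infoMatrix_posSemidef_of_continuous hm hpsd _) hμ₀ hμ) ?_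
  simpa using hfirst.neg.max hsecond.neg

end IsSensitivity

/-- If the convex criterion `Ψ` admits a (jointly) continuous sensitivity function `ψ`, then
`ξ ↦ Ψ(M(ξ))` is continuous on `Ξ_fin(X)` w.r.t. the topology of weak convergence; in
particular one has the bound
`|Ψ(M(η)) − Ψ(M(ξ))| ≤ max{−∫ ψ(M(η),x) dξ(x), −∫ ψ(M(ξ),x) dη(x)}`. -/
theorem criterion_continuous_on_finite_designs {X : Type*} [MetricSpace X] [CompactSpace X]
    [MeasurableSpace X] [BorelSpace X] {d : ℕ}
    (m : X → Matrix (Fin d) (Fin d) ℝ) (hm : Continuous m)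
    (hpsd : ∀ x, (m x).PosSemidef)
    (Ψ : Matrix (Fin d) (Fin d) ℝ → WithTop ℝ)
    (hconv : ∀ A B : Matrix (Fin d) (Fin d) ℝ, A.PosSemidef → B.PosSemidef →
      ∀ α : ℝ, 0 ≤ α → α ≤ 1 →
        Ψ (α • A + (1 - α) • B) ≤ (α : WithTop ℝ) * Ψ A + ((1 - α : ℝ) : WithTop ℝ) * Ψ B)
    (ψ : Matrix (Fin d) (Fin d) ℝ → X → ℝ) (hψ : IsSensitivity m Ψ ψ)
    (hψcont : ContinuousOn (fun q : Matrix (Fin d) (Fin d) ℝ × X => ψ q.1 q.2)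
      ({A : Matrix (Fin d) (Fin d) ℝ | A.PosSemidef ∧ Ψ A ≠ ⊤} ×ˢ Set.univ)) :
    (∀ ξ η : Measure X, IsProbabilityMeasure ξ → IsProbabilityMeasure η →
      Ψ (infoMatrix m ξ) ≠ ⊤ → Ψ (infoMatrix m η) ≠ ⊤ →
      |(Ψ (infoMatrix m η)).untopD 0 - (Ψ (infoMatrix m ξ)).untopD 0| ≤
        max (-(∫ x, ψ (infoMatrix m η) x ∂ξ)) (-(∫ x, ψ (infoMatrix m ξ) x ∂η))) ∧
    ContinuousOn (fun μ : ProbabilityMeasure X => (Ψ (infoMatrix m (μ : Measure X))).untopD 0)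
      {μ : ProbabilityMeasure X | Ψ (infoMatrix m (μ : Measure X)) ≠ ⊤} :=
  ⟨fun ξ η _ _ hΨξ hΨη => hψ.abs_sub_le_max hconv
      (infoMatrix_posSemidef_of_continuous hm hpsd ξ)
      (infoMatrix_posSemidef_of_continuous hm hpsd η) hΨξ hΨη,
    hψ.continuousOn hconv hm hpsd hψcont⟩
end

section
/- Let h: ℕ → [0,∞) and C' ≥ 0 satisfy the recursion h(k+1) ≤ (1 − 2/(k+2))·h(k) + C'·(2/(k+2))² for all k ≥ k₀, for some k₀ ≥ 1. Then for all k ≥ k₀ + 1, h(k) ≤ (2/(k+2))·( ((k₀+1)/2)·h(k₀) + 2C' ). -/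
/-- Abstract sublinear-rate induction: if `h(k+1) ≤ (1 − 2/(k+2))·h(k) + C'·(2/(k+2))²` for all
`k ≥ k₀` (with `k₀ ≥ 1`), then `h(k) ≤ (2/(k+2))·(((k₀+1)/2)·h(k₀) + 2C')` for all
`k ≥ k₀ + 1`. -/
theorem sublinear_rate_induction (h : ℕ → ℝ) (hnn : ∀ k, 0 ≤ h k) (C' : ℝ) (hC' : 0 ≤ C')
    (k₀ : ℕ) (hk₀ : 1 ≤ k₀)
    (hrec : ∀ k, k₀ ≤ k →
      h (k + 1) ≤ (1 - 2 / ((k : ℝ) + 2)) * h k + C' * (2 / ((k : ℝ) + 2)) ^ 2) :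
    ∀ k, k₀ + 1 ≤ k →
      h k ≤ 2 / ((k : ℝ) + 2) * (((k₀ : ℝ) + 1) / 2 * h k₀ + 2 * C') := by
  set A : ℝ := ((k₀ : ℝ) + 1) / 2 * h k₀ + 2 * C' with hA
  have hk₀R : (1:ℝ) ≤ (k₀ : ℝ) := by exact_mod_cast hk₀
  have hA2 : 2 * C' ≤ A := by
    rw [hA]
    nlinarith [hnn k₀]
  -- generic clearing of denominators in the recursion
  have key : ∀ k : ℕ, k₀ ≤ k →
      ((k:ℝ)+2)^2 * h (k+1) ≤ (((k:ℝ)+2)^2 - 2*((k:ℝ)+2)) * h k + 4 * C' := by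
    intro k hk
    have hx : (0:ℝ) < (k:ℝ) + 2 := by positivity
    have H := hrec k hk
    have H2 := mul_le_mul_of_nonneg_left H (le_of_lt (by positivity : (0:ℝ) < ((k:ℝ)+2)^2))
    calc ((k:ℝ)+2)^2 * h (k+1) ≤ ((k:ℝ)+2)^2 * ((1 - 2 / ((k : ℝ) + 2)) * h k + C' * (2 / ((k : ℝ) + 2)) ^ 2) := H2
      _ = (((k:ℝ)+2)^2 - 2*((k:ℝ)+2)) * h k + 4 * C' := by
          field_simp
          ring
  intro k hk
  induction k, hk using Nat.le_induction with
  | base =>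
    have hx : (0:ℝ) < (k₀:ℝ) + 2 := by positivity
    have K := key k₀ le_rfl
    have hn0 := hnn k₀
    have hn1 := hnn (k₀ + 1)
    have K' := mul_le_mul_of_nonneg_left K (by positivity : (0:ℝ) ≤ (k₀:ℝ)+3)
    have hgoal : (((k₀:ℝ)+1) + 2) * h (k₀+1) ≤ 2 * A := by
      have hb : (((k₀:ℝ)+1) + 2) * h (k₀+1) * ((k₀:ℝ)+2)^2 ≤ 2 * A * ((k₀:ℝ)+2)^2 := by
        rw [hA]
        nlinarith [K', mul_nonneg hn0 (le_of_lt hx), mul_nonneg hC' (le_of_lt hx),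
          mul_nonneg (mul_nonneg hC' (le_of_lt hx)) (le_of_lt hx)]
      exact le_of_mul_le_mul_right hb (by positivity)
    push_cast
    rw [div_mul_eq_mul_div, le_div_iff₀ (by positivity)]
    push_cast at hgoal ⊢
    linarith
  | succ k hk ih =>
    have hx : (0:ℝ) < (k:ℝ) + 2 := by positivity
    have hk2 : (2:ℝ) ≤ (k:ℝ) := by
      have : 2 ≤ k := le_trans (by omega) hk
      exact_mod_cast this
    have K := key k (by omega)
    have ih' : ((k:ℝ)+2) * h k ≤ 2 * A := by
      rw [div_mul_eq_mul_div, le_div_iff₀ hx] at ih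
      linarith
    have hn0 := hnn k
    have hn1 := hnn (k + 1)
    have K' := mul_le_mul_of_nonneg_left K (by positivity : (0:ℝ) ≤ (k:ℝ)+3)
    have hgoal : (((k:ℝ)+1) + 2) * h (k+1) ≤ 2 * A := by
      have hb : (((k:ℝ)+1) + 2) * h (k+1) * ((k:ℝ)+2)^2 ≤ 2 * A * ((k:ℝ)+2)^2 := by
        nlinarith [K', mul_le_mul_of_nonneg_left ih' (by nlinarith : (0:ℝ) ≤ ((k:ℝ)+3)*((k:ℝ))),
          mul_nonneg hn0 (le_of_lt hx), mul_nonneg hC' (le_of_lt hx),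
          mul_nonneg (mul_nonneg hC' (le_of_lt hx)) (le_of_lt hx), hA2]
      exact le_of_mul_le_mul_right hb (by positivity)
    push_cast
    rw [div_mul_eq_mul_div, le_div_iff₀ (by positivity)]
    push_cast at hgoal ⊢
    linarith
end

section
/- Let h: ℕ → [0,∞), g: ℕ → [0,∞), and constants 0 < μ ≤ C satisfy, for every k: (a) g(k) ≥ h(k), (b) h(k) ≤ g(k)²/(2μ), and (c) h(k+1) ≤ min_{α ∈ [0,1]} ( h(k) − g(k)·α + C·α²/2 ). Then h(k+1) ≤ r·h(k) for every k, where r := 1 − min{1/2, μ/C}. Consequently h(k) ≤ rᵏ·h(0) for all k. -/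
/-- Abstract linear-rate contraction: if `g(k) ≥ h(k) ≥ 0`, `h(k) ≤ g(k)²/(2μ)`, and
`h(k+1) ≤ h(k) − g(k)·α + C·α²/2` for every step size `α ∈ [0,1]`, where `0 < μ ≤ C`, then
`h(k+1) ≤ r·h(k)` with `r = 1 − min{1/2, μ/C}`, and consequently `h(k) ≤ rᵏ·h(0)`. -/
theorem linear_rate_contraction (h g : ℕ → ℝ) (μ C : ℝ) (hμ : 0 < μ) (hμC : μ ≤ C)
    (hnn : ∀ k, 0 ≤ h k) (hgnn : ∀ k, 0 ≤ g k)
    (hga : ∀ k, h k ≤ g k)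
    (hgb : ∀ k, h k ≤ g k ^ 2 / (2 * μ))
    (hgc : ∀ k, ∀ α : ℝ, 0 ≤ α → α ≤ 1 → h (k + 1) ≤ h k - g k * α + C * α ^ 2 / 2) :
    (∀ k, h (k + 1) ≤ (1 - min (1 / 2) (μ / C)) * h k) ∧
      (∀ k, h k ≤ (1 - min (1 / 2) (μ / C)) ^ k * h 0) := by
  have hC : 0 < C := lt_of_lt_of_le hμ hμC
  set r : ℝ := 1 - min (1 / 2) (μ / C) with hr
  clear_value r
  have hr0 : 0 ≤ r := by
    have h12 : min (1 / 2 : ℝ) (μ / C) ≤ 1 / 2 := min_le_left _ _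
    rw [hr]; linarith
  have step : ∀ k, h (k + 1) ≤ r * h k := by
    intro k
    rcases le_or_gt C (g k) with hge | hlt
    · -- g k ≥ C : use α = 1
      have h1 := hgc k 1 zero_le_one le_rfl
      have h2 : h (k + 1) ≤ h k / 2 := by nlinarith [hga k]
      have hhalf : (1 / 2 : ℝ) * h k ≤ r * h k := by
        have h12 : min (1 / 2 : ℝ) (μ / C) ≤ 1 / 2 := min_le_left _ _
        nlinarith [hnn k]
      linarith
    · -- g k < C : use α = g k / C
      have hα0 : 0 ≤ g k / C := div_nonneg (hgnn k) hC.le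
      have hα1 : g k / C ≤ 1 := (div_le_one hC).2 hlt.le
      have h1 := hgc k (g k / C) hα0 hα1
      have key : h (k + 1) ≤ h k - g k ^ 2 / (2 * C) := by
        have e1 : C * (g k / C) ^ 2 / 2 = g k ^ 2 / (2 * C) := by field_simp
        have e2 : g k * (g k / C) = 2 * (g k ^ 2 / (2 * C)) := by field_simp
        rw [e1, e2] at h1
        linarith
      have hgsq : 2 * μ * h k ≤ g k ^ 2 := by
        have := hgb k
        have hpos : (0:ℝ) < 2 * μ := by linarith
        nlinarith [mul_le_mul_of_nonneg_left this hpos.le,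
          mul_div_cancel₀ (g k ^ 2) (ne_of_gt hpos)]
      have h3 : h (k + 1) ≤ (1 - μ / C) * h k := by
        have hdiv : μ * h k / C ≤ g k ^ 2 / (2 * C) := by
          rw [div_le_div_iff₀ hC (by positivity)]
          nlinarith
        have e3 : (1 - μ / C) * h k = h k - μ * h k / C := by ring
        linarith
      have h4 : (1 - μ / C) * h k ≤ r * h k := by
        have h12 : min (1 / 2 : ℝ) (μ / C) ≤ μ / C := min_le_right _ _
        nlinarith [hnn k]
      linarith
  refine ⟨step, ?_⟩
  intro k
  induction k with
  | zero => simp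
  | succ n ih =>
    calc h (n + 1) ≤ r * h n := step n
      _ ≤ r * ((r ^ n) * h 0) := mul_le_mul_of_nonneg_left ih hr0
      _ = r ^ (n + 1) * h 0 := by ring
end
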